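/- arXiv:2504.10063 — 2 statements merged into one kernel-verified Lean document; each statement's English description precedes it below -/
import Mathlib

section
/- In a finite complete weighted graph on vertex set $V$ with $n$ vertices, for any threshold $\alpha$, the number of connected components of the threshold subgraph $G_{\le \alpha}$ equals $n$ minus the number of edges of weight at most $\alpha$ in any fixed minimum spanning tree of $G$, provided all edge weights are distinct. -/
open SimpleGraph Finset

variable {V : Type*} [Fintype V] [DecidableEq V]

/-- Total weight of (the edges of) a graph `F` under weight function `w`. -/
noncomputable def fweight (w : Sym2 V → ℝ) (F : SimpleGraph V) : ℝ :=
  ∑ e ∈ F.edgeSet.toFinite.toFinset, w e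

/-- `F` is a spanning forest attaching `R` to `P` (where `R` is the complement of `P`):
acyclic, every vertex connected to some vertex of `P`, and no two distinct
vertices of `P` connected (so each component contains exactly one vertex of `P`). -/
def IsAttachingForest (P : Finset V) (F : SimpleGraph V) : Prop :=
  F.IsAcyclic ∧ (∀ v : V, ∃ p ∈ P, F.Reachable v p) ∧
    ∀ p ∈ P, ∀ q ∈ P, p ≠ q → ¬F.Reachable p q

/-- Minimum total weight of a spanning forest attaching the complement of `P` to `P`. -/
noncomputable def MTopDiv (w : Sym2 V → ℝ) (P : Finset V) : ℝ :=
  sInf {x | ∃ F : SimpleGraph V, IsAttachingForest P F ∧ fweight w F = x}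

/-- Minimum spanning tree weight of the complete weighted graph on `V`. -/
noncomputable def MSTweight (w : Sym2 V → ℝ) : ℝ :=
  sInf {x | ∃ T : SimpleGraph V, T.IsTree ∧ fweight w T = x}

/-- Threshold subgraph: edges of weight at most `α`. -/
def thresholdGraph (w : Sym2 V → ℝ) (α : ℝ) : SimpleGraph V where
  Adj u v := u ≠ v ∧ w s(u, v) ≤ α
  symm := by
    constructor
    intro u v h
    exact ⟨h.1.symm, by rw [Sym2.eq_swap]; exact h.2⟩
  loopless := by constructor; intro v h; exact h.1 rfl

set_option linter.unusedSectionVars false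

/-- Walk decomposition after deleting one edge. -/
lemma lemA {G : SimpleGraph V} {x y a b : V} (r : G.Reachable a b) :
    (G \ fromEdgeSet {s(x,y)}).Reachable a b ∨
    ((G \ fromEdgeSet {s(x,y)}).Reachable a x ∧ (G \ fromEdgeSet {s(x,y)}).Reachable y b) ∨
    ((G \ fromEdgeSet {s(x,y)}).Reachable a y ∧ (G \ fromEdgeSet {s(x,y)}).Reachable x b) := by
  set G' := G \ fromEdgeSet {s(x,y)} with hG'
  obtain ⟨p⟩ := r
  induction p with
  | nil => exact Or.inl (Reachable.refl _)
  | @cons u c b h q ih =>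
    by_cases hec : s(u,c) = s(x,y)
    · rw [Sym2.eq_iff] at hec
      rcases hec with ⟨rfl, rfl⟩ | ⟨rfl, rfl⟩
      · rcases ih with h1 | ⟨h2, h3⟩ | ⟨h2, h3⟩
        · exact Or.inr (Or.inl ⟨Reachable.refl _, h1⟩)
        · exact Or.inl (h2.symm.trans h3)
        · exact Or.inl h3
      · rcases ih with h1 | ⟨h2, h3⟩ | ⟨h2, h3⟩
        · exact Or.inr (Or.inr ⟨Reachable.refl _, h1⟩)
        · exact Or.inl h3
        · exact Or.inl (h2.symm.trans h3)
    · have hadj : G'.Adj u c := by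
        rw [hG', sdiff_adj, fromEdgeSet_adj]
        exact ⟨h, fun hh => hec hh.1⟩
      rcases ih with h1 | ⟨h2, h3⟩ | ⟨h2, h3⟩
      · exact Or.inl (hadj.reachable.trans h1)
      · exact Or.inr (Or.inl ⟨hadj.reachable.trans h2, h3⟩)
      · exact Or.inr (Or.inr ⟨hadj.reachable.trans h2, h3⟩)

lemma lemB {G : SimpleGraph V} {x y u v : V} (p : G.Walk u v) (hp : p.IsTrail)
    (he : s(x,y) ∈ p.edges) :
    ((G \ fromEdgeSet {s(x,y)}).Reachable u x ∧ (G \ fromEdgeSet {s(x,y)}).Reachable y v) ∨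
    ((G \ fromEdgeSet {s(x,y)}).Reachable u y ∧ (G \ fromEdgeSet {s(x,y)}).Reachable x v) := by
  set G' := G \ fromEdgeSet {s(x,y)} with hG'
  induction p with
  | nil => simp at he
  | @cons a c b h q ih =>
    rw [Walk.edges_cons, List.mem_cons] at he
    rw [Walk.isTrail_cons] at hp
    by_cases hec : s(a,c) = s(x,y)
    · -- the tail q avoids the edge
      have hq' : s(x,y) ∉ q.edges := hec ▸ hp.2
      have hqr : G'.Reachable c b := by
        refine ⟨q.transfer G' fun e heq => ?_⟩
        have h1 := q.edges_subset_edgeSet heq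
        rw [hG', edgeSet_sdiff, edgeSet_fromEdgeSet, Set.mem_diff]
        constructor
        · exact h1
        · rintro ⟨hmem1, -⟩
          rw [Set.mem_singleton_iff] at hmem1
          exact hq' (hmem1 ▸ heq)
      rw [Sym2.eq_iff] at hec
      rcases hec with ⟨rfl, rfl⟩ | ⟨rfl, rfl⟩
      · exact Or.inl ⟨Reachable.refl _, hqr⟩
      · exact Or.inr ⟨Reachable.refl _, hqr⟩
    · have he' : s(x,y) ∈ q.edges := by
        rcases he with he | he
        · exact absurd he.symm hec
        · exact he
      have hadj : G'.Adj a c := by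
        rw [hG', sdiff_adj, fromEdgeSet_adj]
        exact ⟨h, fun hh => hec hh.1⟩
      rcases ih hp.1 he' with ⟨h1, h2⟩ | ⟨h1, h2⟩
      · exact Or.inl ⟨hadj.reachable.trans h1, h2⟩
      · exact Or.inr ⟨hadj.reachable.trans h1, h2⟩

lemma card_aux {A B : Type*} [Finite A] (φ : A → B) (hsurj : Function.Surjective φ)
    (a₁ a₂ : A) (hne : a₁ ≠ a₂) (heq : φ a₁ = φ a₂)
    (hinj : ∀ a a', φ a = φ a' → a = a' ∨ (a = a₁ ∧ a' = a₂) ∨ (a = a₂ ∧ a' = a₁)) :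
    Nat.card A = Nat.card B + 1 := by
  classical
  haveI : Finite B := Finite.of_surjective φ hsurj
  haveI := Fintype.ofFinite A
  haveI := Fintype.ofFinite B
  have hψ : Function.Bijective (fun a : {a : A // a ≠ a₂} => φ a.1) := by
    constructor
    · rintro ⟨a, ha⟩ ⟨a', ha'⟩ hfa
      rcases hinj a a' hfa with h | ⟨rfl, rfl⟩ | ⟨rfl, rfl⟩
      · exact Subtype.ext h
      · exact absurd rfl ha'
      · exact absurd rfl ha
    · intro b
      obtain ⟨a, rfl⟩ := hsurj b
      by_cases ha : a = a₂
      · exact ⟨⟨a₁, hne⟩, by simp only [ha] at heq ⊢; exact heq⟩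
      · exact ⟨⟨a, ha⟩, rfl⟩
  have h1 : Nat.card {a : A // a ≠ a₂} = Nat.card B := Nat.card_eq_of_bijective _ hψ
  have h2 : Nat.card {a : A // a ≠ a₂} = Nat.card A - 1 := by
    simp only [Nat.card_eq_fintype_card]
    rw [Fintype.card_subtype_compl (p := fun a => a = a₂), Fintype.card_subtype_eq a₂]
  haveI : Nonempty A := ⟨a₁⟩
  have h3 : 1 ≤ Nat.card A := Nat.one_le_iff_ne_zero.2 (by
    rw [Nat.card_eq_fintype_card]
    exact Fintype.card_ne_zero)
  omega

lemma cc_card_eq {G H : SimpleGraph V} (h : ∀ u v, G.Reachable u v ↔ H.Reachable u v) :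
    Nat.card G.ConnectedComponent = Nat.card H.ConnectedComponent := by
  refine Nat.card_congr ⟨Quot.map id (fun a b r => (h a b).1 r),
    Quot.map id (fun a b r => (h a b).2 r), ?_, ?_⟩
  · intro c; induction c using SimpleGraph.ConnectedComponent.ind; rfl
  · intro c; induction c using SimpleGraph.ConnectedComponent.ind; rfl

lemma acyclic_anti {G H : SimpleGraph V} (hle : G ≤ H) (h : H.IsAcyclic) : G.IsAcyclic := by
  intro v c hc
  exact h (c.transfer H fun e he => edgeSet_mono hle (c.edges_subset_edgeSet he)) (hc.transfer _)

lemma forest_card (F : SimpleGraph V) (hF : F.IsAcyclic) :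
    Nat.card F.ConnectedComponent + F.edgeSet.toFinite.toFinset.card = Fintype.card V := by
  classical
  generalize hn : F.edgeSet.toFinite.toFinset.card = n
  induction n generalizing F with
  | zero =>
    have hbot : F = ⊥ := by
      rw [← edgeSet_eq_empty]
      have := Finset.card_eq_zero.mp hn
      rwa [Set.Finite.toFinset_eq_empty] at this
    subst hbot
    have hb : Function.Bijective (⊥ : SimpleGraph V).connectedComponentMk := by
      constructor
      · intro a b hab
        exact reachable_bot.mp (SimpleGraph.ConnectedComponent.exact hab)
      · intro c
        induction c using SimpleGraph.ConnectedComponent.ind with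
        | _ v => exact ⟨v, rfl⟩
    rw [add_zero, ← Nat.card_eq_fintype_card]
    exact (Nat.card_eq_of_bijective _ hb).symm
  | succ n ih =>
    have hpos : 0 < F.edgeSet.toFinite.toFinset.card := by omega
    obtain ⟨e, he⟩ := Finset.card_pos.mp hpos
    induction e using Sym2.ind with
    | _ x y =>
    rw [Set.Finite.mem_toFinset] at he
    have hadj : F.Adj x y := F.mem_edgeSet.mp he
    set F' := F \ fromEdgeSet {s(x,y)} with hF'def
    have hF'le : F' ≤ F := sdiff_le
    have hEF' : F'.edgeSet.toFinite.toFinset = F.edgeSet.toFinite.toFinset.erase s(x,y) := by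
      ext e
      simp only [Set.Finite.mem_toFinset, Finset.mem_erase, hF'def, edgeSet_sdiff,
        edgeSet_fromEdgeSet, Set.mem_diff, Set.mem_setOf_eq, Set.mem_singleton_iff]
      constructor
      · rintro ⟨h1, h2⟩
        exact ⟨fun hh => h2 ⟨hh, F.not_isDiag_of_mem_edgeSet h1⟩, h1⟩
      · rintro ⟨h1, h2⟩
        exact ⟨h2, fun hh => h1 hh.1⟩
    have hcard' : F'.edgeSet.toFinite.toFinset.card = n := by
      rw [hEF', Finset.card_erase_of_mem (Set.Finite.mem_toFinset _ |>.mpr he), hn]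
      omega
    have hF'ac : F'.IsAcyclic := acyclic_anti hF'le hF
    have key : Nat.card F'.ConnectedComponent = Nat.card F.ConnectedComponent + 1 := by
      apply card_aux (ConnectedComponent.map (Hom.ofLE hF'le))
        (a₁ := F'.connectedComponentMk x) (a₂ := F'.connectedComponentMk y)
      · intro c
        induction c using SimpleGraph.ConnectedComponent.ind with
        | _ v => exact ⟨F'.connectedComponentMk v, rfl⟩
      · intro hcontra
        have hbr : F.IsBridge s(x,y) := isAcyclic_iff_forall_adj_isBridge.mp hF hadj
        exact (isBridge_iff.mp hbr) (SimpleGraph.ConnectedComponent.exact hcontra)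
      · exact SimpleGraph.ConnectedComponent.sound hadj.reachable
      · intro a a'
        induction a using SimpleGraph.ConnectedComponent.ind with
        | _ u =>
        induction a' using SimpleGraph.ConnectedComponent.ind with
        | _ v =>
        intro hmap
        have hreach : F.Reachable u v := SimpleGraph.ConnectedComponent.exact hmap
        rcases lemA (x := x) (y := y) hreach with h1 | ⟨h2, h3⟩ | ⟨h2, h3⟩
        · exact Or.inl (SimpleGraph.ConnectedComponent.sound h1)
        · exact Or.inr (Or.inl ⟨SimpleGraph.ConnectedComponent.sound h2,
            SimpleGraph.ConnectedComponent.sound h3.symm⟩)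
        · exact Or.inr (Or.inr ⟨SimpleGraph.ConnectedComponent.sound h2,
            SimpleGraph.ConnectedComponent.sound h3.symm⟩)
    have := ih F' hF'ac hcard'
    omega

lemma exchange [Nonempty V] {w : Sym2 V → ℝ} {T : SimpleGraph V} (hT : T.IsTree)
    (hTmin : ∀ T' : SimpleGraph V, T'.IsTree → fweight w T ≤ fweight w T')
    {α : ℝ} {u v : V} (huv : w s(u,v) ≤ α) (p : T.Walk u v) (hp : p.IsPath) :
    ∀ e ∈ p.edges, w e ≤ α := by
  by_contra hcon
  push_neg at hcon
  obtain ⟨f, hf, hfw⟩ := hcon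
  induction f using Sym2.ind with
  | _ x y =>
  have hxyT : T.Adj x y := T.mem_edgeSet.mp (p.edges_subset_edgeSet hf)
  have hune : u ≠ v := by
    rintro rfl
    rw [Walk.isPath_iff_eq_nil.mp hp] at hf
    simp at hf
  by_cases hTadj : T.Adj u v
  · have hpsingle : p = Walk.cons hTadj Walk.nil :=
      (hT.existsUnique_path u v).unique hp (Path.singleton hTadj).2
    rw [hpsingle] at hf
    simp only [Walk.edges_cons, Walk.edges_nil, List.mem_singleton] at hf
    rw [hf] at hfw
    linarith
  · have hgT : s(u,v) ∉ T.edgeSet := fun hh => hTadj (T.mem_edgeSet.mp hh)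
    set G' := T \ fromEdgeSet {s(x,y)} with hG'def
    set T' := G' ⊔ fromEdgeSet {s(u,v)} with hT'def
    have hB := lemB p hp.isTrail hf
    have hG'T : G' ≤ T := sdiff_le
    have hG'T' : G' ≤ T' := le_sup_left
    have hT'uv : T'.Adj u v := by
      rw [hT'def, sup_adj, fromEdgeSet_adj]
      exact Or.inr ⟨rfl, hune⟩
    have hxy' : T'.Reachable x y := by
      rcases hB with ⟨r1, r2⟩ | ⟨r1, r2⟩
      · exact ((r1.mono hG'T').symm.trans (hT'uv.reachable.trans (r2.mono hG'T').symm))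
      · exact ((r2.mono hG'T').trans (hT'uv.reachable.symm.trans (r1.mono hG'T')))
    have hz : ∀ z, T'.Reachable z u := by
      intro z
      rcases lemA (x := x) (y := y) (hT.isConnected.preconnected z u) with h1 | ⟨h2, h3⟩ | ⟨h2, h3⟩
      · exact h1.mono hG'T'
      · exact (h2.mono hG'T').trans (hxy'.trans (h3.mono hG'T'))
      · exact (h2.mono hG'T').trans (hxy'.symm.trans (h3.mono hG'T'))
    have hconn : T'.Connected := by
      rw [connected_iff]
      exact ⟨fun a b => (hz a).trans (hz b).symm, inferInstance⟩
    have hbr : ¬ G'.Reachable x y :=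
      (isBridge_iff.mp (isAcyclic_iff_forall_adj_isBridge.mp hT.IsAcyclic hxyT))
    have hacyc : T'.IsAcyclic := by
      intro c0 c hc
      by_cases hgc : s(u,v) ∈ c.edges
      · have hreach : (T' \ fromEdgeSet {s(u,v)}).Reachable u v :=
          ((adj_and_reachable_delete_edges_iff_exists_cycle (G := T')).mpr ⟨c0, c, hc, hgc⟩).2
        have hle2 : T' \ fromEdgeSet {s(u,v)} ≤ G' := by
          intro a b hab
          rw [sdiff_adj, hT'def, sup_adj] at hab
          rcases hab with ⟨h1 | h1, h2⟩
          · exact h1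
          · exact absurd h1 h2
        have hreach' : G'.Reachable u v := hreach.mono hle2
        rcases hB with ⟨r1, r2⟩ | ⟨r1, r2⟩
        · exact hbr (r1.symm.trans (hreach'.trans r2.symm))
        · exact hbr (r2.trans (hreach'.symm.trans r1))
      · have hcT : ∀ e ∈ c.edges, e ∈ T.edgeSet := by
          intro e he
          have := c.edges_subset_edgeSet he
          rw [hT'def, edgeSet_sup, Set.mem_union] at this
          rcases this with h1 | h1
          · exact edgeSet_mono hG'T h1
          · rw [edgeSet_fromEdgeSet, Set.mem_diff, Set.mem_singleton_iff] at h1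
            exact absurd (h1.1 ▸ he) hgc
        exact hT.IsAcyclic (c.transfer T hcT) (hc.transfer _)
    have hT'tree : T'.IsTree := ⟨hconn, hacyc⟩
    have hfmem : s(x,y) ∈ T.edgeSet.toFinite.toFinset := Set.Finite.mem_toFinset _ |>.mpr hxyT
    have hedges : T'.edgeSet.toFinite.toFinset
        = insert s(u,v) (T.edgeSet.toFinite.toFinset.erase s(x,y)) := by
      ext e
      simp only [Set.Finite.mem_toFinset, Finset.mem_insert, Finset.mem_erase, hT'def, hG'def,
        edgeSet_sup, edgeSet_sdiff, edgeSet_fromEdgeSet, Set.mem_union, Set.mem_diff,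
        Set.mem_setOf_eq, Set.mem_singleton_iff]
      constructor
      · rintro (⟨h1, h2⟩ | ⟨h1, h2⟩)
        · exact Or.inr ⟨fun hh => h2 ⟨hh, T.not_isDiag_of_mem_edgeSet h1⟩, h1⟩
        · exact Or.inl h1
      · rintro (rfl | ⟨h1, h2⟩)
        · exact Or.inr ⟨rfl, by rw [Sym2.mem_diagSet, Sym2.mk_isDiag_iff]; exact hune⟩
        · exact Or.inl ⟨h2, fun hh => h1 hh.1⟩
    have hgnotin : s(u,v) ∉ T.edgeSet.toFinite.toFinset.erase s(x,y) := by
      intro hh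
      exact hgT (Set.Finite.mem_toFinset _ |>.mp (Finset.mem_of_mem_erase hh))
    have hw' : fweight w T' = w s(u,v) + (fweight w T - w s(x,y)) := by
      rw [fweight, hedges, Finset.sum_insert hgnotin, Finset.sum_erase_eq_sub hfmem]
      rfl
    have : fweight w T' < fweight w T := by rw [hw']; linarith
    exact absurd (hTmin T' hT'tree) (not_le.mpr this)

theorem stmt11 [Nonempty V] (w : Sym2 V → ℝ)
    (hdistinct : ∀ e₁ e₂ : Sym2 V, ¬e₁.IsDiag → ¬e₂.IsDiag → e₁ ≠ e₂ → w e₁ ≠ w e₂)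
    (T : SimpleGraph V) (hT : T.IsTree)
    (hTmin : ∀ T' : SimpleGraph V, T'.IsTree → fweight w T ≤ fweight w T') (α : ℝ) :
    Nat.card (thresholdGraph w α).ConnectedComponent =
      Fintype.card V - (T.edgeSet.toFinite.toFinset.filter (fun e => w e ≤ α)).card := by
  classical
  set F := T ⊓ thresholdGraph w α with hFdef
  have hFle : F ≤ thresholdGraph w α := inf_le_right
  have hFleT : F ≤ T := inf_le_left
  -- per-edge reachability in F
  have hedge : ∀ a b : V, (thresholdGraph w α).Adj a b → F.Reachable a b := by
    intro a b hab
    obtain ⟨hne, hle⟩ := hab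
    obtain ⟨p, hp, -⟩ := hT.existsUnique_path a b
    have hall := exchange hT hTmin hle p hp
    refine ⟨p.transfer F fun e he => ?_⟩
    have h1 := p.edges_subset_edgeSet he
    have h2 := hall e he
    revert h1 h2
    induction e using Sym2.ind with
    | _ c d =>
    intro h1 h2
    rw [mem_edgeSet] at h1 ⊢
    rw [hFdef, inf_adj]
    exact ⟨h1, h1.ne, h2⟩
  have hreach : ∀ a b : V, (thresholdGraph w α).Reachable a b ↔ F.Reachable a b := by
    intro a b
    constructor
    · rintro ⟨q⟩
      induction q with
      | nil => exact Reachable.refl _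
      | cons h q ih => exact (hedge _ _ h).trans ih
    · exact fun h => h.mono hFle
  have hcc : Nat.card (thresholdGraph w α).ConnectedComponent
      = Nat.card F.ConnectedComponent := cc_card_eq hreach
  have hforest := forest_card F (acyclic_anti hFleT hT.IsAcyclic)
  have hfilter : F.edgeSet.toFinite.toFinset
      = T.edgeSet.toFinite.toFinset.filter (fun e => w e ≤ α) := by
    ext e
    simp only [Set.Finite.mem_toFinset, Finset.mem_filter, hFdef, edgeSet_inf, Set.mem_inter_iff]
    constructor
    · rintro ⟨h1, h2⟩
      refine ⟨h1, ?_⟩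
      revert h2
      induction e using Sym2.ind with
      | _ c d =>
      intro h2
      exact h2.2
    · rintro ⟨h1, h2⟩
      refine ⟨h1, ?_⟩
      have hnd : ¬ e.IsDiag := T.not_isDiag_of_mem_edgeSet h1
      revert hnd h2
      induction e using Sym2.ind with
      | _ c d =>
      intro h2 hnd
      rw [mem_edgeSet]
      exact ⟨fun hcd => hnd (by rw [Sym2.mk_isDiag_iff]; exact hcd), h2⟩
  rw [hcc, ← hfilter]
  omega
end

section
/- Let $P, R$ be disjoint finite sets, $P$ nonempty, with nonnegative edge weights on the complete graph on $P \cup R$. If $R = R_1 \cup R_2$ with $R_1, R_2$ disjoint, then $\mathrm{MTopDiv}_G(R, P) \le \mathrm{MTopDiv}_{G_1}(R_1, P) + \mathrm{MTopDiv}_{G_2}(R_2, P)$, where $G_i$ is the induced complete weighted graph on $P \cup R_i$. -/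
open SimpleGraph Finset

variable {V : Type*} [Fintype V] [DecidableEq V]

/-- Minimum attaching-forest weight in the induced complete weighted graph on `S`,
attaching `S \\ P` to `P`. -/
noncomputable def MTopDivOn (w : Sym2 V → ℝ) (P S : Finset V) : ℝ :=
  sInf {x | ∃ F : SimpleGraph {v : V // v ∈ S}, IsAttachingForest (P.subtype (· ∈ S)) F ∧
    fweight (fun e => w (Sym2.map Subtype.val e)) F = x}

section AuxAttach

lemma aux_reach_of_delete {W : Type*} (G : SimpleGraph W) (a b : W)
    (hab : (G.deleteEdges {s(a, b)}).Reachable a b) {u v : W} (h : G.Reachable u v) :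
    (G.deleteEdges {s(a, b)}).Reachable u v := by
  obtain ⟨p⟩ := h
  induction p with
  | nil => rfl
  | @cons x y z had q ih =>
    by_cases he : s(x, y) = s(a, b)
    · rw [Sym2.eq_iff] at he
      rcases he with ⟨rfl, rfl⟩ | ⟨rfl, rfl⟩
      · exact hab.trans ih
      · exact hab.symm.trans ih
    · exact (Adj.reachable (deleteEdges_adj.mpr ⟨had, by simpa using he⟩)).trans ih

lemma aux_reach_or_endpoints {W : Type*} (G : SimpleGraph W) (a b : W) {u v : W}
    (h : G.Reachable u v) :
    (G.deleteEdges {s(a, b)}).Reachable u v ∨ (G.deleteEdges {s(a, b)}).Reachable u a ∨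
      (G.deleteEdges {s(a, b)}).Reachable u b := by
  obtain ⟨p⟩ := h
  induction p with
  | nil => exact Or.inl (Reachable.refl _)
  | @cons x y z had q ih =>
    by_cases he : s(x, y) = s(a, b)
    · rw [Sym2.eq_iff] at he
      rcases he with ⟨rfl, rfl⟩ | ⟨rfl, rfl⟩
      · exact Or.inr (Or.inl (Reachable.refl _))
      · exact Or.inr (Or.inr (Reachable.refl _))
    · have had' : (G.deleteEdges {s(a, b)}).Adj x y :=
        deleteEdges_adj.mpr ⟨had, by simpa using he⟩
      rcases ih with h | h | h
      · exact Or.inl (had'.reachable.trans h)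
      · exact Or.inr (Or.inl (had'.reachable.trans h))
      · exact Or.inr (Or.inr (had'.reachable.trans h))

lemma aux_trim {W : Type*} [Fintype W] [DecidableEq W] (P : Finset W) :
    ∀ (n : ℕ) (G : SimpleGraph W),
    G.edgeSet.toFinite.toFinset.card ≤ n → (∀ v, ∃ p ∈ P, G.Reachable v p) →
    ∃ F : SimpleGraph W, F ≤ G ∧ IsAttachingForest P F := by
  intro n
  induction n with
  | zero =>
    intro G hcard hQ
    have hcard0 : G.edgeSet.toFinite.toFinset.card = 0 := Nat.le_zero.mp hcard
    have : G.edgeSet = ∅ := by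
      simpa [Set.Finite.toFinset_eq_empty] using Finset.card_eq_zero.mp hcard0
    have hbot : G = ⊥ := edgeSet_eq_empty.mp this
    subst hbot
    refine ⟨⊥, le_rfl, ?_, hQ, ?_⟩
    · intro v c hc
      cases c with
      | nil => exact hc.ne_nil rfl
      | cons h q => exact h
    · intro p _ q _ hpq hr
      exact hpq (reachable_bot.mp hr)
  | succ n ih =>
    intro G hcard hQ
    by_cases hA : G.IsAcyclic
    · by_cases hS : ∀ p ∈ P, ∀ q ∈ P, p ≠ q → ¬G.Reachable p q
      · exact ⟨G, le_rfl, hA, hQ, hS⟩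
      · push_neg at hS
        obtain ⟨p, hp, q, hq, hpq, hr⟩ := hS
        obtain ⟨ω⟩ := hr
        obtain ⟨π, hπ⟩ := ω.toPath
        cases π with
        | nil => exact absurd rfl hpq
        | @cons _ x _ h' q' =>
          set G' := G.deleteEdges {s(p, x)} with hG'
          have hne : s(p, x) ∉ q'.edges := by
            have := hπ.edges_nodup
            rw [Walk.edges_cons] at this
            exact (List.nodup_cons.mp this).1
          have hxq : G'.Reachable x q := by
            refine ⟨q'.transfer G' fun e he => ?_⟩
            rw [hG', edgeSet_deleteEdges]
            refine ⟨q'.edges_subset_edgeSet he, ?_⟩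
            simp only [Set.mem_singleton_iff]
            rintro rfl
            exact hne he
          have hQ' : ∀ v, ∃ r ∈ P, G'.Reachable v r := by
            intro v
            obtain ⟨p', hp', hv⟩ := hQ v
            rcases aux_reach_or_endpoints G p x hv with h | h | h
            · exact ⟨p', hp', h⟩
            · exact ⟨p, hp, h⟩
            · exact ⟨q, hq, h.trans hxq⟩
          have hmem : s(p, x) ∈ G.edgeSet.toFinite.toFinset := by simpa using h'
          have hsub : G'.edgeSet.toFinite.toFinset ⊆
              G.edgeSet.toFinite.toFinset.erase s(p, x) := by
            intro e he
            rw [Set.Finite.mem_toFinset, hG', edgeSet_deleteEdges] at he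
            rw [Finset.mem_erase, Set.Finite.mem_toFinset]
            exact ⟨by simpa using he.2, he.1⟩
          have hcard' : G'.edgeSet.toFinite.toFinset.card ≤ n := by
            have := Finset.card_le_card hsub
            rw [Finset.card_erase_of_mem hmem] at this
            omega
          obtain ⟨F, hle, hF⟩ := ih G' hcard' hQ'
          exact ⟨F, hle.trans (deleteEdges_le _), hF⟩
    · rw [isAcyclic_iff_forall_adj_isBridge] at hA
      push_neg at hA
      obtain ⟨a, b, hab, hbr⟩ := hA
      rw [isBridge_iff] at hbr
      have hreach : (G \ fromEdgeSet {s(a, b)}).Reachable a b := by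
        by_contra hcon
        exact hbr hcon
      have hreach' : (G.deleteEdges {s(a, b)}).Reachable a b := hreach
      set G' := G.deleteEdges {s(a, b)} with hG'
      have hQ' : ∀ v, ∃ r ∈ P, G'.Reachable v r := by
        intro v
        obtain ⟨p', hp', hv⟩ := hQ v
        exact ⟨p', hp', aux_reach_of_delete G a b hreach' hv⟩
      have hmem : s(a, b) ∈ G.edgeSet.toFinite.toFinset := by simpa using hab
      have hsub : G'.edgeSet.toFinite.toFinset ⊆
          G.edgeSet.toFinite.toFinset.erase s(a, b) := by
        intro e he
        rw [Set.Finite.mem_toFinset, hG', edgeSet_deleteEdges] at he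
        rw [Finset.mem_erase, Set.Finite.mem_toFinset]
        exact ⟨by simpa using he.2, he.1⟩
      have hcard' : G'.edgeSet.toFinite.toFinset.card ≤ n := by
        have := Finset.card_le_card hsub
        rw [Finset.card_erase_of_mem hmem] at this
        omega
      obtain ⟨F, hle, hF⟩ := ih G' hcard' hQ'
      exact ⟨F, hle.trans (deleteEdges_le _), hF⟩

lemma aux_fweight_nonneg (w : Sym2 V → ℝ) (hw : ∀ e, 0 ≤ w e) (F : SimpleGraph V) :
    0 ≤ fweight w F :=
  Finset.sum_nonneg fun e _ => hw e

lemma aux_fweight_mono (w : Sym2 V → ℝ) (hw : ∀ e, 0 ≤ w e) {F G : SimpleGraph V}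
    (h : F ≤ G) : fweight w F ≤ fweight w G := by
  apply Finset.sum_le_sum_of_subset_of_nonneg
  · intro e he
    rw [Set.Finite.mem_toFinset] at he ⊢
    exact edgeSet_mono h he
  · intro e _ _; exact hw e

lemma aux_fweight_sup_le (w : Sym2 V → ℝ) (hw : ∀ e, 0 ≤ w e) (A B : SimpleGraph V) :
    fweight w (A ⊔ B) ≤ fweight w A + fweight w B := by
  unfold fweight
  have hset : (A ⊔ B).edgeSet.toFinite.toFinset =
      A.edgeSet.toFinite.toFinset ∪ B.edgeSet.toFinite.toFinset := by
    ext e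
    simp [edgeSet_sup]
  rw [hset]
  calc ∑ e ∈ A.edgeSet.toFinite.toFinset ∪ B.edgeSet.toFinite.toFinset, w e
      ≤ ∑ e ∈ A.edgeSet.toFinite.toFinset, w e +
        ∑ e ∈ B.edgeSet.toFinite.toFinset \ A.edgeSet.toFinite.toFinset, w e := by
        rw [← Finset.sum_union Finset.disjoint_sdiff, Finset.union_sdiff_self_eq_union]
    _ ≤ _ := by
        have := Finset.sum_le_sum_of_subset_of_nonneg
          (Finset.sdiff_subset (s := B.edgeSet.toFinite.toFinset)
            (t := A.edgeSet.toFinite.toFinset)) (fun e _ _ => hw e)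
        linarith

/-- Homomorphism into the mapped graph along the subtype embedding. -/
def auxHom (S : Finset V) (F : SimpleGraph {v : V // v ∈ S}) :
    F →g F.map (Function.Embedding.subtype (· ∈ S)) where
  toFun := fun x => (x : V)
  map_rel' := fun h => by
    rw [SimpleGraph.map_adj]
    exact ⟨_, _, h, rfl, rfl⟩

lemma aux_fweight_map (w : Sym2 V → ℝ) (S : Finset V) (F : SimpleGraph {v : V // v ∈ S}) :
    fweight w (F.map (Function.Embedding.subtype (· ∈ S))) =
      fweight (fun e => w (Sym2.map Subtype.val e)) F := by
  unfold fweight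
  have hset : (F.map (Function.Embedding.subtype (· ∈ S))).edgeSet.toFinite.toFinset =
      F.edgeSet.toFinite.toFinset.image (Sym2.map Subtype.val) := by
    ext e
    rw [Set.Finite.mem_toFinset, Finset.mem_image]
    induction e using Sym2.ind with
    | _ u v =>
      rw [mem_edgeSet, SimpleGraph.map_adj]
      constructor
      · rintro ⟨u', v', h, rfl, rfl⟩
        exact ⟨s(u', v'), by rwa [Set.Finite.mem_toFinset, mem_edgeSet], rfl⟩
      · rintro ⟨e', he', hmap⟩
        induction e' using Sym2.ind with
        | _ a b =>
          rw [Set.Finite.mem_toFinset, mem_edgeSet] at he'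
          rw [Sym2.map_pair_eq, Sym2.eq_iff] at hmap
          rcases hmap with ⟨rfl, rfl⟩ | ⟨rfl, rfl⟩
          · exact ⟨a, b, he', rfl, rfl⟩
          · exact ⟨b, a, he'.symm, rfl, rfl⟩
  rw [hset]
  rw [Finset.sum_image]
  intro x _ y _ hxy
  exact Sym2.map.injective Subtype.val_injective hxy

end AuxAttach

theorem stmt17 (P R R₁ R₂ : Finset V) (hP : P.Nonempty) (hdisj : Disjoint P R)
    (huniv : P ∪ R = Finset.univ) (hR : R = R₁ ∪ R₂) (h12 : Disjoint R₁ R₂)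
    (w : Sym2 V → ℝ) (hw : ∀ e, 0 ≤ w e) :
    MTopDiv w P ≤ MTopDivOn w P (P ∪ R₁) + MTopDivOn w P (P ∪ R₂) := by
  obtain ⟨p₀, hp₀⟩ := hP
  -- weight on subtypes
  -- nonemptiness of the constraint sets
  have hne : ∀ S : Finset V, P ⊆ S →
      {x | ∃ F : SimpleGraph {v : V // v ∈ S}, IsAttachingForest (P.subtype (· ∈ S)) F ∧
        fweight (fun e => w (Sym2.map Subtype.val e)) F = x}.Nonempty := by
    intro S hPS
    have hQ : ∀ v : {v : V // v ∈ S}, ∃ p ∈ P.subtype (· ∈ S),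
        (⊤ : SimpleGraph {v : V // v ∈ S}).Reachable v p := by
      intro v
      refine ⟨⟨p₀, hPS hp₀⟩, Finset.mem_subtype.mpr hp₀, ?_⟩
      by_cases hv : v = ⟨p₀, hPS hp₀⟩
      · subst hv; rfl
      · exact (SimpleGraph.top_adj _ _ |>.mpr hv).reachable
    obtain ⟨F, _, hF⟩ := aux_trim (P.subtype (· ∈ S))
      ((⊤ : SimpleGraph {v : V // v ∈ S}).edgeSet.toFinite.toFinset.card) ⊤ le_rfl hQ
    exact ⟨_, F, hF, rfl⟩
  have hne₁ := hne (P ∪ R₁) Finset.subset_union_left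
  have hne₂ := hne (P ∪ R₂) Finset.subset_union_left
  have hbdd : BddBelow {x | ∃ F : SimpleGraph V, IsAttachingForest P F ∧ fweight w F = x} := by
    refine ⟨0, ?_⟩
    rintro x ⟨F, _, rfl⟩
    exact aux_fweight_nonneg w hw F
  -- the key combination step
  have key : ∀ x₁ ∈ {x | ∃ F : SimpleGraph {v : V // v ∈ P ∪ R₁},
        IsAttachingForest (P.subtype (· ∈ P ∪ R₁)) F ∧
        fweight (fun e => w (Sym2.map Subtype.val e)) F = x},
      ∀ x₂ ∈ {x | ∃ F : SimpleGraph {v : V // v ∈ P ∪ R₂},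
        IsAttachingForest (P.subtype (· ∈ P ∪ R₂)) F ∧
        fweight (fun e => w (Sym2.map Subtype.val e)) F = x},
      MTopDiv w P ≤ x₁ + x₂ := by
    rintro x₁ ⟨F₁, hF₁, rfl⟩ x₂ ⟨F₂, hF₂, rfl⟩
    set M₁ := F₁.map (Function.Embedding.subtype (· ∈ P ∪ R₁)) with hM₁
    set M₂ := F₂.map (Function.Embedding.subtype (· ∈ P ∪ R₂)) with hM₂
    set G := M₁ ⊔ M₂ with hG
    have hQ : ∀ v : V, ∃ p ∈ P, G.Reachable v p := by
      intro v
      have hv : v ∈ P ∪ R₁ ∨ v ∈ P ∪ R₂ := by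
        have : v ∈ P ∪ (R₁ ∪ R₂) := by rw [← hR, huniv]; exact Finset.mem_univ v
        rcases Finset.mem_union.mp this with h | h
        · exact Or.inl (Finset.mem_union_left _ h)
        · rcases Finset.mem_union.mp h with h | h
          · exact Or.inl (Finset.mem_union_right _ h)
          · exact Or.inr (Finset.mem_union_right _ h)
      rcases hv with hv | hv
      · obtain ⟨p, hp, hreach⟩ := hF₁.2.1 ⟨v, hv⟩
        refine ⟨(p : V), Finset.mem_subtype.mp hp, ?_⟩
        exact (hreach.map (auxHom (P ∪ R₁) F₁)).mono le_sup_left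
      · obtain ⟨p, hp, hreach⟩ := hF₂.2.1 ⟨v, hv⟩
        refine ⟨(p : V), Finset.mem_subtype.mp hp, ?_⟩
        exact (hreach.map (auxHom (P ∪ R₂) F₂)).mono le_sup_right
    obtain ⟨F, hle, hF⟩ := aux_trim P (G.edgeSet.toFinite.toFinset.card) G le_rfl hQ
    have h1 : MTopDiv w P ≤ fweight w F := csInf_le hbdd ⟨F, hF, rfl⟩
    have h2 : fweight w F ≤ fweight w G := aux_fweight_mono w hw hle
    have h3 : fweight w G ≤ fweight w M₁ + fweight w M₂ := aux_fweight_sup_le w hw M₁ M₂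
    rw [hM₁, aux_fweight_map] at h3
    rw [hM₂, aux_fweight_map] at h3
    linarith
  -- conclude via infima
  rw [MTopDivOn, MTopDivOn]
  have h2 : ∀ x₁ ∈ {x | ∃ F : SimpleGraph {v : V // v ∈ P ∪ R₁},
        IsAttachingForest (P.subtype (· ∈ P ∪ R₁)) F ∧
        fweight (fun e => w (Sym2.map Subtype.val e)) F = x},
      MTopDiv w P - x₁ ≤ sInf {x | ∃ F : SimpleGraph {v : V // v ∈ P ∪ R₂},
        IsAttachingForest (P.subtype (· ∈ P ∪ R₂)) F ∧
        fweight (fun e => w (Sym2.map Subtype.val e)) F = x} := by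
    intro x₁ hx₁
    apply le_csInf hne₂
    intro x₂ hx₂
    linarith [key x₁ hx₁ x₂ hx₂]
  have h3 : MTopDiv w P - sInf {x | ∃ F : SimpleGraph {v : V // v ∈ P ∪ R₂},
        IsAttachingForest (P.subtype (· ∈ P ∪ R₂)) F ∧
        fweight (fun e => w (Sym2.map Subtype.val e)) F = x} ≤
      sInf {x | ∃ F : SimpleGraph {v : V // v ∈ P ∪ R₁},
        IsAttachingForest (P.subtype (· ∈ P ∪ R₁)) F ∧
        fweight (fun e => w (Sym2.map Subtype.val e)) F = x} := by
    apply le_csInf hne₁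
    intro x₁ hx₁
    linarith [h2 x₁ hx₁]
  linarith
end
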